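/- arXiv:1303.7280 — 2 statements merged into one kernel-verified Lean document; each statement's English description precedes it below -/
import Mathlib

section
/- Suppose 𝓑 is a symmetric bilinear form with κ₁|ε(u)|² ≤ 𝓑(u,u) pointwise and |𝓑-cross terms| controlled by κ₂, and let u(·,t) be a solution with I(t) := ∫_Ω e^{2φ}|u(x,t)|² dx and I'(t) = −2∫_Ω { e^{2φ} 𝓑(u,u) + 2 e^{2φ} a_{ij}^{αβ} ∂_β u^j ∂_α φ u^i } dx, where |∇φ| ≤ K a.e. Then I'(t) ≤ 2(κ₂²/κ₁) K² I(t) for a.e. t. -/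
open MeasureTheory

/-- Davies' exponential-weight derivative bound:
`I' = -2∫ e^{2φ}(B + 2C)` with `κ₁E² ≤ B` and `|C| ≤ κ₂ E K U` implies
`I' ≤ 2(κ₂²/κ₁)K² I` where `I = ∫ e^{2φ} U²`. -/
theorem davies_derivative_bound {α : Type*} [MeasurableSpace α] (μ : Measure α)
    (κ₁ κ₂ K : ℝ) (h1 : 0 < κ₁) (h2 : 0 < κ₂) (hK : 0 < K)
    (φ E U Bq Ccross : α → ℝ)
    (hE : ∀ x, 0 ≤ E x) (hU : ∀ x, 0 ≤ U x)
    (hB : ∀ x, κ₁ * (E x)^2 ≤ Bq x)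
    (hC : ∀ x, |Ccross x| ≤ κ₂ * E x * K * U x)
    (hint1 : Integrable (fun x => Real.exp (2*φ x) * (Bq x + 2 * Ccross x)) μ)
    (hint2 : Integrable (fun x => Real.exp (2*φ x) * (U x)^2) μ)
    (hint3 : Integrable (fun x => Real.exp (2*φ x) * (E x)^2) μ)
    (I' I : ℝ)
    (hI' : I' = -2 * ∫ x, Real.exp (2*φ x) * (Bq x + 2 * Ccross x) ∂μ)
    (hI : I = ∫ x, Real.exp (2*φ x) * (U x)^2 ∂μ) :
    I' ≤ 2*(κ₂^2/κ₁)*K^2 * I := by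
  subst hI' hI
  have key : ∀ x, -2 * (Real.exp (2*φ x) * (Bq x + 2 * Ccross x)) ≤
      2*(κ₂^2/κ₁)*K^2 * (Real.exp (2*φ x) * (U x)^2) := by
    intro x
    have he : 0 < Real.exp (2*φ x) := Real.exp_pos _
    have hc := abs_le.mp (hC x)
    have hb := hB x
    rw [show 2*(κ₂^2/κ₁)*K^2 * (Real.exp (2*φ x) * (U x)^2)
        = (2*κ₂^2*K^2*(Real.exp (2*φ x) * (U x)^2))/κ₁ by field_simp,
      le_div_iff₀ h1]
    nlinarith [mul_nonneg he.le (sq_nonneg (κ₁ * E x - κ₂ * K * U x)),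
      mul_le_mul_of_nonneg_left hb he.le,
      mul_le_mul_of_nonneg_left hc.1 he.le, h1.le]
  have hm : (∫ x, -2 * (Real.exp (2*φ x) * (Bq x + 2 * Ccross x)) ∂μ) ≤
      ∫ x, 2*(κ₂^2/κ₁)*K^2 * (Real.exp (2*φ x) * (U x)^2) ∂μ :=
    integral_mono (hint1.const_mul _) (hint2.const_mul _) key
  rw [integral_const_mul, integral_const_mul] at hm
  linarith
end

section
/- Iteration lemma for decay of Dirichlet integrals: let φ : (0, R] → [0,∞) be nondecreasing and suppose there exist A > 0, α > β ≥ 0, B ≥ 0 such that φ(ρ) ≤ A[(ρ/r)^α + ε] φ(r) + B r^β for all 0 < ρ ≤ r ≤ R, where ε ≤ ε₀(A, α, β). Then there is C = C(A, α, β) with φ(ρ) ≤ C [(ρ/R)^β φ(R) + B ρ^β] for all 0 < ρ ≤ R. -/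
set_option maxHeartbeats 1000000 in
/-- Standard iteration (hole-filling) lemma for decay of Dirichlet integrals. -/
theorem iteration_lemma (A alpha beta : ℝ) (hA : 0 < A) (hba : beta < alpha)
    (hb : 0 ≤ beta) :
    ∃ ε₀ > 0, ∃ C > 0, ∀ (R B ε : ℝ) (φ : ℝ → ℝ),
      0 < R → 0 ≤ B → 0 ≤ ε → ε ≤ ε₀ →
      (∀ s t, 0 < s → s ≤ t → t ≤ R → φ s ≤ φ t) →
      (∀ ρ ∈ Set.Ioc (0:ℝ) R, 0 ≤ φ ρ) →
      (∀ ρ r : ℝ, 0 < ρ → ρ ≤ r → r ≤ R →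
        φ ρ ≤ A * ((ρ/r) ^ alpha + ε) * φ r + B * r ^ beta) →
      ∀ ρ ∈ Set.Ioc (0:ℝ) R,
        φ ρ ≤ C * ((ρ/R) ^ beta * φ R + B * ρ ^ beta) := by
  set γ : ℝ := (alpha + beta) / 2 with hγdef
  have hγα : γ < alpha := by simp only [hγdef]; linarith
  have hβγ : beta < γ := by simp only [hγdef]; linarith
  have hδ : (0:ℝ) < alpha - γ := by linarith
  have h2A : (0:ℝ) < 2 * A := by linarith
  set τ : ℝ := min (1/2 : ℝ) (((2*A)⁻¹) ^ (alpha - γ)⁻¹) with hτdef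
  have hτ0 : 0 < τ := by
    apply lt_min (by norm_num)
    exact Real.rpow_pos_of_pos (by positivity) _
  have hτ1 : τ < 1 := lt_of_le_of_lt (min_le_left _ _) (by norm_num)
  have hτα : 0 < τ ^ alpha := Real.rpow_pos_of_pos hτ0 _
  have hτγ : 0 < τ ^ γ := Real.rpow_pos_of_pos hτ0 _
  have hkey : 2 * A * τ ^ alpha ≤ τ ^ γ := by
    have h1 : τ ^ (alpha - γ) ≤ (2*A)⁻¹ := by
      have h2 : τ ≤ ((2*A)⁻¹) ^ (alpha - γ)⁻¹ := min_le_right _ _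
      calc τ ^ (alpha - γ) ≤ (((2*A)⁻¹) ^ (alpha - γ)⁻¹) ^ (alpha - γ) :=
            Real.rpow_le_rpow hτ0.le h2 hδ.le
        _ = (2*A)⁻¹ := by
            rw [← Real.rpow_mul (by positivity), inv_mul_cancel₀ hδ.ne', Real.rpow_one]
    have h3 : τ ^ alpha = τ ^ γ * τ ^ (alpha - γ) := by
      rw [← Real.rpow_add hτ0]; ring_nf
    rw [h3]
    calc 2 * A * (τ ^ γ * τ ^ (alpha - γ)) ≤ 2 * A * (τ ^ γ * (2*A)⁻¹) := by
          gcongr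
      _ = τ ^ γ := by field_simp
  set M : ℝ := (1 - τ ^ (γ - beta))⁻¹ with hMdef
  have hτγβ : τ ^ (γ - beta) < 1 :=
    Real.rpow_lt_one hτ0.le hτ1 (by linarith)
  have hτγβ0 : 0 < τ ^ (γ - beta) := Real.rpow_pos_of_pos hτ0 _
  have hM1 : 1 ≤ M := by
    rw [hMdef]
    exact (one_le_inv₀ (by linarith)).mpr (by linarith)
  have hM0 : 0 < M := lt_of_lt_of_le one_pos hM1
  have hMe : M * (1 - τ ^ (γ - beta)) = 1 := inv_mul_cancel₀ (by linarith)
  clear_value M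
  have hτβ : 0 < τ ^ beta := Real.rpow_pos_of_pos hτ0 _
  have hτβ1 : τ ^ beta ≤ 1 := Real.rpow_le_one hτ0.le hτ1.le hb
  have hτ2β : 0 < τ ^ (2*beta) := Real.rpow_pos_of_pos hτ0 _
  clear_value τ γ
  refine ⟨τ ^ alpha, hτα, M * (τ ^ (2*beta))⁻¹, by positivity, ?_⟩
  intro R B ε φ hR hB hε hεε hmono hφ0 hiter
  -- key step
  have hstep : ∀ r : ℝ, 0 < r → r ≤ R → φ (τ * r) ≤ τ ^ γ * φ r + B * r ^ beta := by
    intro r hr hrR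
    have h1 := hiter (τ * r) r (by positivity) (by nlinarith) hrR
    have h2 : (τ * r / r) = τ := by field_simp
    rw [h2] at h1
    have hφr : 0 ≤ φ r := hφ0 r ⟨hr, hrR⟩
    have h3 : A * (τ ^ alpha + ε) ≤ τ ^ γ := by nlinarith
    nlinarith
  -- iteration
  have hφR : 0 ≤ φ R := hφ0 R ⟨hR, le_refl R⟩
  have hind : ∀ k : ℕ, φ (τ ^ k * R) ≤
      (τ ^ k : ℝ) ^ γ * φ R + M * B * ((τ ^ k : ℝ) * R) ^ beta / τ ^ beta := by
    intro k
    induction k with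
    | zero =>
      simp only [pow_zero, one_mul]
      rw [Real.one_rpow, one_mul]
      have : 0 ≤ M * B * R ^ beta / τ ^ beta := by positivity
      linarith
    | succ k ih =>
      have hσ0 : (0:ℝ) < τ ^ k := pow_pos hτ0 k
      have hσ1 : (τ:ℝ) ^ k ≤ 1 := pow_le_one₀ hτ0.le hτ1.le
      have hr0 : 0 < τ ^ k * R := by positivity
      have hrR : τ ^ k * R ≤ R := by nlinarith
      have h1 : φ (τ ^ (k+1) * R) ≤ τ ^ γ * φ (τ ^ k * R) + B * (τ ^ k * R) ^ beta := by
        have := hstep (τ ^ k * R) hr0 hrR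
        have he : τ * (τ ^ k * R) = τ ^ (k+1) * R := by ring
        rwa [he] at this
      have h2 : τ ^ γ * φ (τ ^ k * R) ≤
          τ ^ γ * ((τ ^ k : ℝ) ^ γ * φ R + M * B * ((τ ^ k : ℝ) * R) ^ beta / τ ^ beta) := by
        gcongr
      have h3 : ((τ : ℝ) ^ (k+1)) ^ γ = τ ^ γ * ((τ:ℝ) ^ k) ^ γ := by
        rw [pow_succ, mul_comm ((τ:ℝ)^k) τ, Real.mul_rpow hτ0.le hσ0.le]
      have h4 : ((τ:ℝ) ^ (k+1) * R) ^ beta = τ ^ beta * ((τ:ℝ) ^ k * R) ^ beta := by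
        rw [show (τ:ℝ) ^ (k+1) * R = τ * (τ ^ k * R) by ring,
          Real.mul_rpow hτ0.le (by positivity)]
      -- need: τ^γ * (M B X / τ^β) + B X ≤ M B (τ^β X) / τ^β = M B X
      have hX : (0:ℝ) ≤ ((τ:ℝ) ^ k * R) ^ beta := by positivity
      have h5 : τ ^ γ * (M * B * ((τ ^ k : ℝ) * R) ^ beta / τ ^ beta)
          + B * ((τ:ℝ) ^ k * R) ^ beta
          ≤ M * B * ((τ ^ (k+1) : ℝ) * R) ^ beta / τ ^ beta := by
        rw [h4]
        have hMg : τ ^ γ * M / τ ^ beta + 1 ≤ M := by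
          have hτγβeq : τ ^ γ / τ ^ beta = τ ^ (γ - beta) := by
            rw [← Real.rpow_sub hτ0]
          have he2 : τ ^ γ * M / τ ^ beta = M * τ ^ (γ - beta) := by
            rw [mul_comm (τ ^ γ) M, mul_div_assoc, hτγβeq]
          have hMe' : M - M * τ ^ (γ - beta) = 1 := by linear_combination hMe
          rw [he2]; linarith
        have : M * B * (τ ^ beta * ((τ:ℝ) ^ k * R) ^ beta) / τ ^ beta
            = M * B * ((τ:ℝ) ^ k * R) ^ beta := by
          field_simp
        rw [this]
        have := mul_le_mul_of_nonneg_right hMg (mul_nonneg hB hX)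
        calc τ ^ γ * (M * B * ((τ ^ k : ℝ) * R) ^ beta / τ ^ beta)
              + B * ((τ:ℝ) ^ k * R) ^ beta
            = (τ ^ γ * M / τ ^ beta + 1) * (B * ((τ:ℝ) ^ k * R) ^ beta) := by ring
          _ ≤ M * (B * ((τ:ℝ) ^ k * R) ^ beta) := this
          _ = M * B * ((τ:ℝ) ^ k * R) ^ beta := by ring
      calc φ (τ ^ (k+1) * R) ≤ τ ^ γ * φ (τ ^ k * R) + B * (τ ^ k * R) ^ beta := h1
        _ ≤ τ ^ γ * ((τ ^ k : ℝ) ^ γ * φ R + M * B * ((τ ^ k : ℝ) * R) ^ beta / τ ^ beta)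
            + B * ((τ:ℝ) ^ k * R) ^ beta := by linarith
        _ = ((τ:ℝ) ^ (k+1)) ^ γ * φ R
            + (τ ^ γ * (M * B * ((τ ^ k : ℝ) * R) ^ beta / τ ^ beta)
              + B * ((τ:ℝ) ^ k * R) ^ beta) := by rw [h3]; ring
        _ ≤ ((τ:ℝ) ^ (k+1)) ^ γ * φ R + M * B * ((τ ^ (k+1) : ℝ) * R) ^ beta / τ ^ beta := by
            linarith
  -- final step
  rintro ρ ⟨hρ0, hρR⟩
  -- find minimal k with τ^(k+1) * R < ρ
  have hex : ∃ n : ℕ, τ ^ (n+1) * R < ρ := by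
    obtain ⟨n, hn⟩ := exists_pow_lt_of_lt_one (div_pos hρ0 hR) hτ1
    refine ⟨n, ?_⟩
    have h1 : τ ^ (n+1) ≤ τ ^ n := pow_le_pow_of_le_one hτ0.le hτ1.le (Nat.le_succ n)
    have h2 : τ ^ (n+1) < ρ / R := lt_of_le_of_lt h1 hn
    exact (lt_div_iff₀ hR).mp h2
  classical
  set k := Nat.find hex with hkdef
  have hk1 : τ ^ (k+1) * R < ρ := Nat.find_spec hex
  have hk2 : ρ ≤ τ ^ k * R := by
    rcases Nat.eq_zero_or_pos k with h | h
    · rw [h]; simpa using hρR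
    · have := Nat.find_min hex (m := k - 1) (by omega)
      push_neg at this
      have he : k - 1 + 1 = k := by omega
      rwa [he] at this
  have hσ0 : (0:ℝ) < τ ^ k := pow_pos hτ0 k
  have hσ1 : (τ:ℝ) ^ k ≤ 1 := pow_le_one₀ hτ0.le hτ1.le
  have hrR : τ ^ k * R ≤ R := by nlinarith
  have hm : φ ρ ≤ φ (τ ^ k * R) := hmono ρ (τ ^ k * R) hρ0 hk2 hrR
  have hikr := hind k
  -- bound (τ^k)^γ ≤ (ρ/R)^β / τ^β
  have hb1 : ((τ:ℝ) ^ k) ^ γ ≤ ((τ:ℝ) ^ k) ^ beta :=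
    Real.rpow_le_rpow_of_exponent_ge hσ0 hσ1 hβγ.le
  have hb2 : ((τ:ℝ) ^ k) ^ beta ≤ (ρ/R) ^ beta / τ ^ beta := by
    have h1 : (τ:ℝ) ^ (k+1) < ρ / R := by
      rw [lt_div_iff₀ hR]; exact hk1
    have h2 : ((τ:ℝ) ^ (k+1)) ^ beta ≤ (ρ/R) ^ beta :=
      Real.rpow_le_rpow (by positivity) h1.le hb
    have h3 : ((τ:ℝ) ^ (k+1)) ^ beta = τ ^ beta * ((τ:ℝ) ^ k) ^ beta := by
      rw [pow_succ, mul_comm ((τ:ℝ)^k) τ, Real.mul_rpow hτ0.le hσ0.le]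
    rw [le_div_iff₀ hτβ]
    calc ((τ:ℝ) ^ k) ^ beta * τ ^ beta = ((τ:ℝ) ^ (k+1)) ^ beta := by rw [h3]; ring
      _ ≤ (ρ/R) ^ beta := h2
  -- bound (τ^k * R)^β ≤ ρ^β / τ^β
  have hb3 : ((τ:ℝ) ^ k * R) ^ beta ≤ ρ ^ beta / τ ^ beta := by
    have h1 : (τ:ℝ) ^ k * R ≤ ρ / τ := by
      rw [le_div_iff₀ hτ0]
      calc (τ:ℝ) ^ k * R * τ = τ ^ (k+1) * R := by ring
        _ ≤ ρ := hk1.le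
    have h2 : ((τ:ℝ) ^ k * R) ^ beta ≤ (ρ / τ) ^ beta :=
      Real.rpow_le_rpow (by positivity) h1 hb
    have h3 : (ρ / τ) ^ beta = ρ ^ beta / τ ^ beta :=
      Real.div_rpow hρ0.le hτ0.le beta
    rw [h3] at h2; exact h2
  have hρβ : (0:ℝ) < ρ ^ beta := Real.rpow_pos_of_pos hρ0 _
  have hρRβ : (0:ℝ) ≤ (ρ/R) ^ beta := by positivity
  have hτ2βe : τ ^ (2*beta) = τ ^ beta * τ ^ beta := by
    rw [← Real.rpow_add hτ0]; ring_nf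
  -- combine
  have hc1 : ((τ:ℝ) ^ k) ^ γ * φ R ≤ (ρ/R) ^ beta / τ ^ beta * φ R := by
    exact mul_le_mul_of_nonneg_right (hb1.trans hb2) hφR
  have hc2 : M * B * ((τ ^ k : ℝ) * R) ^ beta / τ ^ beta
      ≤ M * B * (ρ ^ beta / τ ^ beta) / τ ^ beta := by
    gcongr
  have hfin1 : (ρ/R) ^ beta / τ ^ beta * φ R
      ≤ M * (τ ^ (2*beta))⁻¹ * ((ρ/R) ^ beta * φ R) := by
    have h2 : τ ^ beta * τ ^ beta ≤ τ ^ beta := by nlinarith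
    have h3 : (τ ^ beta)⁻¹ ≤ (τ ^ beta * τ ^ beta)⁻¹ :=
      inv_anti₀ (by positivity) h2
    have h4 : (τ ^ beta * τ ^ beta)⁻¹ ≤ M * (τ ^ beta * τ ^ beta)⁻¹ := by
      nlinarith [inv_pos.mpr (mul_pos hτβ hτβ)]
    have hinv : (τ ^ beta)⁻¹ ≤ M * (τ ^ (2*beta))⁻¹ := by
      rw [hτ2βe]; exact h3.trans h4
    have hX : 0 ≤ (ρ/R) ^ beta * φ R := mul_nonneg hρRβ hφR
    calc (ρ/R) ^ beta / τ ^ beta * φ R = (τ ^ beta)⁻¹ * ((ρ/R) ^ beta * φ R) := by ring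
      _ ≤ M * (τ ^ (2*beta))⁻¹ * ((ρ/R) ^ beta * φ R) :=
          mul_le_mul_of_nonneg_right hinv hX
  have hfin2 : M * B * (ρ ^ beta / τ ^ beta) / τ ^ beta
      = M * (τ ^ (2*beta))⁻¹ * (B * ρ ^ beta) := by
    rw [hτ2βe]; field_simp
  calc φ ρ ≤ φ (τ ^ k * R) := hm
    _ ≤ (τ ^ k : ℝ) ^ γ * φ R + M * B * ((τ ^ k : ℝ) * R) ^ beta / τ ^ beta := hikr
    _ ≤ M * (τ ^ (2*beta))⁻¹ * ((ρ/R) ^ beta * φ R)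
        + M * (τ ^ (2*beta))⁻¹ * (B * ρ ^ beta) := by
        rw [← hfin2]
        have := hc1.trans hfin1
        linarith [hc2]
    _ = M * (τ ^ (2*beta))⁻¹ * ((ρ/R) ^ beta * φ R + B * ρ ^ beta) := by ring
end
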